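/- arXiv:1702.08245 — 10 statements merged into one kernel-verified Lean document; each statement's English description precedes it below -/
import Mathlib

section
/- The subspace sum graph G(V) is a complete graph (i.e., every pair of distinct vertices is adjacent) if and only if dim V = 2. -/
open Module

/-- The subspace sum graph of a vector space `V` over a field `K`: vertices are the
nontrivial proper subspaces of `V`, and two distinct vertices are adjacent iff their
sum is all of `V`. -/
def subspaceSumGraph (K V : Type*) [Field K] [AddCommGroup V] [Module K V] :
    SimpleGraph {W : Submodule K V // W ≠ ⊥ ∧ W ≠ ⊤} where
  Adj W₁ W₂ := W₁ ≠ W₂ ∧ (W₁ : Submodule K V) ⊔ (W₂ : Submodule K V) = ⊤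
  symm := by
    constructor
    intro a b h
    exact ⟨h.1.symm, by rw [sup_comm]; exact h.2⟩
  loopless := by
    constructor
    intro a h
    exact h.1 rfl

/-! In dimension 2 every nontrivial proper subspace is a line, hence a hyperplane, and two
distinct hyperplanes span `V`. In dimension at least 3 there is a flag `0 < W₁ < W₂ < V`,
and then `W₁ + W₂ = W₂ ≠ V`, so `W₁` and `W₂` are distinct non-adjacent vertices. -/

namespace Submodule

variable {K V : Type*} [Field K] [AddCommGroup V] [Module K V] [FiniteDimensional K V]

theorem exists_lt_finrank_le_succ {W : Submodule K V} (hW : W ≠ ⊤) :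
    ∃ U : Submodule K V, W < U ∧ finrank K U ≤ finrank K W + 1 := by
  obtain ⟨w, -, hw⟩ := SetLike.exists_of_lt (lt_top_iff_ne_top.2 hW)
  refine ⟨W ⊔ K ∙ w, left_lt_sup.2 fun h ↦ hw (h (mem_span_singleton_self w)), ?_⟩
  calc finrank K ↥(W ⊔ K ∙ w) ≤ finrank K W + finrank K (K ∙ w) :=
        finrank_add_le_finrank_add_finrank _ _
    _ ≤ finrank K W + 1 := by
        gcongr
        simpa using finrank_span_le_card ({w} : Set V)

theorem exists_bot_lt_lt_lt_top (hV : 3 ≤ finrank K V) :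
    ∃ W₁ W₂ : Submodule K V, ⊥ < W₁ ∧ W₁ < W₂ ∧ W₂ < ⊤ := by
  have h_ne_top {W : Submodule K V} (hW : finrank K W < 3) : W ≠ ⊤ := by
    rintro rfl
    rw [finrank_top] at hW
    omega
  obtain ⟨W₁, hbot, hW₁⟩ := exists_lt_finrank_le_succ (h_ne_top (W := ⊥) (by simp))
  rw [finrank_bot, zero_add] at hW₁
  obtain ⟨W₂, h₁₂, hW₂⟩ := exists_lt_finrank_le_succ (h_ne_top (W := W₁) (by omega))
  exact ⟨W₁, W₂, hbot, h₁₂, lt_top_iff_ne_top.2 (h_ne_top (by omega))⟩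

theorem isCoatom_of_finrank_eq_two (hV : finrank K V = 2) {W : Submodule K V}
    (hbot : W ≠ ⊥) (htop : W ≠ ⊤) : IsCoatom W := by
  refine ⟨htop, fun U hWU ↦ eq_top_of_finrank_eq (le_antisymm (finrank_le U) ?_)⟩
  have hW : 0 < finrank K W := finrank_pos_iff.2 (nontrivial_iff_ne_bot.2 hbot)
  have := finrank_lt_finrank_of_lt hWU
  omega

end Submodule

theorem subspaceSumGraph_not_adj_of_le {K V : Type*} [Field K] [AddCommGroup V] [Module K V]
    {W₁ W₂ : {W : Submodule K V // W ≠ ⊥ ∧ W ≠ ⊤}} (h : (W₁ : Submodule K V) ≤ W₂) :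
    ¬(subspaceSumGraph K V).Adj W₁ W₂ := fun hadj ↦
  W₂.2.2 (sup_eq_right.2 h ▸ hadj.2)

/-- The subspace sum graph `G(V)` is complete (every pair of distinct vertices is
adjacent) if and only if `dim V = 2`. -/
theorem subspaceSumGraph_complete_iff (K V : Type*) [Field K] [AddCommGroup V] [Module K V]
    [FiniteDimensional K V] (hdim : 1 < finrank K V) :
    (∀ W₁ W₂ : {W : Submodule K V // W ≠ ⊥ ∧ W ≠ ⊤}, W₁ ≠ W₂ →
      (subspaceSumGraph K V).Adj W₁ W₂) ↔ finrank K V = 2 := by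
  constructor
  · intro hcomplete
    by_contra h2
    obtain ⟨W₁, W₂, hbot, h₁₂, htop⟩ :=
      Submodule.exists_bot_lt_lt_lt_top (K := K) (V := V) (by omega)
    exact subspaceSumGraph_not_adj_of_le (W₁ := ⟨W₁, hbot.ne', (h₁₂.trans htop).ne⟩)
      (W₂ := ⟨W₂, (hbot.trans h₁₂).ne', htop.ne⟩) h₁₂.le
      (hcomplete _ _ fun h ↦ h₁₂.ne (congrArg Subtype.val h))
  · intro h2 W₁ W₂ hne
    exact ⟨hne, (Submodule.isCoatom_of_finrank_eq_two h2 W₁.2.1 W₁.2.2).sup_eq_top_of_ne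
      (Submodule.isCoatom_of_finrank_eq_two h2 W₂.2.1 W₂.2.2) (Subtype.coe_injective.ne hne)⟩
end

section
/- If dim V ≥ 3, then G(V) is connected with diameter exactly 2; concretely, there exist two distinct non-adjacent vertices, and for any two distinct nontrivial proper subspaces W₁, W₂ of V with W₁ + W₂ ≠ V there exists a nontrivial proper subspace W₃ with W₁ + W₃ = V and W₂ + W₃ = V. -/
open Module

/-!
Two nonzero subspaces `W₁, W₂` are both supplemented by the kernel of any linear form that
vanishes neither on `W₁` nor on `W₂`. Such a form exists over every field, and its kernel is a
nontrivial proper subspace once `dim V ≥ 2`; so any two vertices have a common neighbour.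
When `dim V ≥ 3`, two distinct lines span a proper subspace, hence are non-adjacent vertices.
-/

namespace SimpleGraph

variable {α : Type*} {G : SimpleGraph α}

lemma ediam_eq_two_of_commonNeighbors_nonempty
    (h : ∀ u v, u ≠ v → ¬ G.Adj u v → (G.commonNeighbors u v).Nonempty)
    {u v : α} (huv : u ≠ v) (hnadj : ¬ G.Adj u v) : G.ediam = 2 := by
  refine le_antisymm (ediam_le_iff.mpr fun a b => not_lt.mp fun hab => ?_) ?_
  · obtain ⟨hne, hnadj', hempty⟩ := two_lt_edist_iff.mp hab
    exact (h a b hne hnadj').ne_empty hempty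
  · rw [← edist_eq_two_iff.mpr ⟨huv, hnadj, h u v huv hnadj⟩]
    exact edist_le_ediam

end SimpleGraph

section VectorSpace

variable {K V : Type*} [Field K] [AddCommGroup V] [Module K V]

-- `Module.exists_dual_forall_apply_ne_zero` would need `K` infinite.
lemma Module.Dual.exists_apply_ne_zero_and_apply_ne_zero {x y : V} (hx : x ≠ 0)
    (hy : y ≠ 0) : ∃ f : Dual K V, f x ≠ 0 ∧ f y ≠ 0 := by
  obtain ⟨f, hfx⟩ : ∃ f : Dual K V, f x ≠ 0 := by
    simpa using (forall_dual_apply_eq_zero_iff K x).not.mpr hx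
  obtain ⟨g, hgy⟩ : ∃ g : Dual K V, g y ≠ 0 := by
    simpa using (forall_dual_apply_eq_zero_iff K y).not.mpr hy
  by_cases hfy : f y = 0
  · -- if moreover `g x = 0`, then `f + g` works
    by_cases hgx : g x = 0
    · exact ⟨f + g, by simpa [hgx] using hfx, by simpa [hfy] using hgy⟩
    · exact ⟨g, hgx, hgy⟩
  · exact ⟨f, hfx, hfy⟩

lemma Submodule.sup_ker_eq_top_of_mem {W : Submodule K V} {f : Dual K V} {x : V}
    (hxW : x ∈ W) (hfx : f x ≠ 0) : W ⊔ LinearMap.ker f = ⊤ :=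
  top_unique <| (LinearMap.span_singleton_sup_ker_eq_top f hfx).ge.trans <|
    sup_le_sup_right ((span_singleton_le_iff_mem x W).mpr hxW) _

lemma Submodule.exists_ne_bot_ne_top_sup_eq_top_sup_eq_top [FiniteDimensional K V]
    (hdim : 2 ≤ finrank K V) {W₁ W₂ : Submodule K V} (h₁ : W₁ ≠ ⊥)
    (h₂ : W₂ ≠ ⊥) : ∃ W₃ : Submodule K V, W₃ ≠ ⊥ ∧ W₃ ≠ ⊤ ∧ W₁ ⊔ W₃ = ⊤ ∧ W₂ ⊔ W₃ = ⊤ := by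
  obtain ⟨x, hxW, hx⟩ := exists_mem_ne_zero_of_ne_bot h₁
  obtain ⟨y, hyW, hy⟩ := exists_mem_ne_zero_of_ne_bot h₂
  obtain ⟨f, hfx, hfy⟩ := Dual.exists_apply_ne_zero_and_apply_ne_zero (K := K) hx hy
  have hf : f ≠ 0 := fun h => hfx (by simp [h])
  have hker := Dual.finrank_ker_add_one_of_ne_zero hf
  refine ⟨LinearMap.ker f, fun h => ?_, LinearMap.ker_eq_top.not.mpr hf,
    sup_ker_eq_top_of_mem hxW hfx, sup_ker_eq_top_of_mem hyW hfy⟩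
  rw [h, finrank_bot] at hker
  omega

lemma Submodule.exists_ne_bot_ne_sup_ne_top [FiniteDimensional K V]
    (hdim : 3 ≤ finrank K V) :
    ∃ W₁ W₂ : Submodule K V, W₁ ≠ ⊥ ∧ W₂ ≠ ⊥ ∧ W₁ ≠ W₂ ∧ W₁ ⊔ W₂ ≠ ⊤ := by
  have : Nontrivial V := nontrivial_of_finrank_pos (by omega : 0 < finrank K V)
  obtain ⟨x, hx⟩ := exists_ne (0 : V)
  have hline : finrank K (K ∙ x) = 1 := finrank_span_singleton hx
  obtain ⟨y, hy⟩ := SetLike.exists_not_mem_of_ne_top (K ∙ x) fun h => by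
    rw [h, finrank_top] at hline
    omega
  have hy0 : y ≠ 0 := fun h => hy (h ▸ zero_mem _)
  refine ⟨K ∙ x, K ∙ y, by simpa using hx, by simpa using hy0,
    fun h => hy (h ▸ mem_span_singleton_self y), fun h => ?_⟩
  have := finrank_add_le_finrank_add_finrank (K ∙ x) (K ∙ y)
  rw [h, finrank_top, hline, finrank_span_singleton hy0] at this
  omega

end VectorSpace

section subspaceSumGraph

variable {K V : Type*} [Field K] [AddCommGroup V] [Module K V]

lemma subspaceSumGraph_adj_iff {u v : {W : Submodule K V // W ≠ ⊥ ∧ W ≠ ⊤}} :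
    (subspaceSumGraph K V).Adj u v ↔ (u : Submodule K V) ⊔ v = ⊤ :=
  ⟨And.right, fun h => ⟨fun huv => u.2.2 (by rwa [← huv, sup_idem] at h), h⟩⟩

lemma subspaceSumGraph_commonNeighbors_nonempty [FiniteDimensional K V]
    (hdim : 2 ≤ finrank K V) (u v : {W : Submodule K V // W ≠ ⊥ ∧ W ≠ ⊤}) :
    ((subspaceSumGraph K V).commonNeighbors u v).Nonempty := by
  obtain ⟨W, hbot, htop, huW, hvW⟩ :=
    Submodule.exists_ne_bot_ne_top_sup_eq_top_sup_eq_top hdim u.2.1 v.2.1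
  exact ⟨⟨W, hbot, htop⟩, subspaceSumGraph_adj_iff.mpr huW,
    subspaceSumGraph_adj_iff.mpr hvW⟩

end subspaceSumGraph

/-- If `dim V ≥ 3`, then `G(V)` is connected with diameter exactly `2`; concretely,
there exist two distinct non-adjacent vertices, and for any two distinct nontrivial
proper subspaces `W₁, W₂` with `W₁ + W₂ ≠ V` there is a nontrivial proper subspace
`W₃` with `W₁ + W₃ = V` and `W₂ + W₃ = V`. -/
theorem subspaceSumGraph_connected_diam_two (K V : Type*) [Field K] [AddCommGroup V]
    [Module K V] [FiniteDimensional K V] (hdim : 3 ≤ finrank K V) :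
    (subspaceSumGraph K V).Connected ∧ (subspaceSumGraph K V).diam = 2 ∧
    (∃ W₁ W₂ : {W : Submodule K V // W ≠ ⊥ ∧ W ≠ ⊤}, W₁ ≠ W₂ ∧
      ¬ (subspaceSumGraph K V).Adj W₁ W₂) ∧
    (∀ W₁ W₂ : Submodule K V, W₁ ≠ ⊥ → W₁ ≠ ⊤ → W₂ ≠ ⊥ → W₂ ≠ ⊤ → W₁ ≠ W₂ →
      W₁ ⊔ W₂ ≠ ⊤ → ∃ W₃ : Submodule K V, W₃ ≠ ⊥ ∧ W₃ ≠ ⊤ ∧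
        W₁ ⊔ W₃ = ⊤ ∧ W₂ ⊔ W₃ = ⊤) := by
  obtain ⟨W₁, W₂, h₁, h₂, hne, hsup⟩ := Submodule.exists_ne_bot_ne_sup_ne_top hdim
  let u : {W : Submodule K V // W ≠ ⊥ ∧ W ≠ ⊤} :=
    ⟨W₁, h₁, ne_top_of_le_ne_top hsup le_sup_left⟩
  let v : {W : Submodule K V // W ≠ ⊥ ∧ W ≠ ⊤} :=
    ⟨W₂, h₂, ne_top_of_le_ne_top hsup le_sup_right⟩
  have huv : u ≠ v := fun h => hne (congrArg Subtype.val h)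
  have hnadj : ¬ (subspaceSumGraph K V).Adj u v := mt subspaceSumGraph_adj_iff.mp hsup
  have hdiam : (subspaceSumGraph K V).ediam = 2 :=
    SimpleGraph.ediam_eq_two_of_commonNeighbors_nonempty
      (fun a b _ _ => subspaceSumGraph_commonNeighbors_nonempty (by omega) a b) huv hnadj
  have : Nonempty {W : Submodule K V // W ≠ ⊥ ∧ W ≠ ⊤} := ⟨u⟩
  refine ⟨SimpleGraph.connected_of_ediam_ne_top (by simp [hdiam]),
    by simp [SimpleGraph.diam, hdiam], ⟨u, v, huv, hnadj⟩, fun W₁ W₂ h₁ _ h₂ _ _ _ => ?_⟩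
  exact Submodule.exists_ne_bot_ne_top_sup_eq_top_sup_eq_top (by omega) h₁ h₂
end

section
/- G(V) is triangulated: for every nontrivial proper subspace W₁ of V there exist nontrivial proper subspaces W₂, W₃ of V, with W₁, W₂, W₃ pairwise distinct, such that W₁ + W₂ = V, W₂ + W₃ = V and W₁ + W₃ = V. -/
open Module

lemma exists_surj_aux (K : Type*) [Field K] (P Q : Type*) [AddCommGroup P] [Module K P]
    [AddCommGroup Q] [Module K Q] [FiniteDimensional K P] [FiniteDimensional K Q]
    (h : finrank K P ≤ finrank K Q) : ∃ g : Q →ₗ[K] P, Function.Surjective g := by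
  classical
  set m := finrank K P
  let bP := finBasis K P
  let bQ := finBasis K Q
  refine ⟨bQ.constr K (fun i => if h' : (i : ℕ) < m then bP ⟨i, h'⟩ else 0), ?_⟩
  rw [← LinearMap.range_eq_top, ← top_le_iff, ← bP.span_eq, Submodule.span_le]
  rintro _ ⟨i, rfl⟩
  refine ⟨bQ (Fin.castLE h i), ?_⟩
  rw [Basis.constr_basis]
  simp [Fin.castLE, i.isLt]

lemma triangle_aux {K V : Type*} [Field K] [AddCommGroup V] [Module K V]
    [FiniteDimensional K V] (P Q : Submodule K V) (hP : P ≠ ⊥) (hQ : Q ≠ ⊥)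
    (hdisj : P ⊓ Q = ⊥) (hle : finrank K P ≤ finrank K Q) :
    ∃ W₃ : Submodule K V, W₃ ≠ ⊥ ∧ W₃ ≠ ⊤ ∧ W₃ ≠ P ∧ W₃ ≠ Q ∧
      Q ≤ P ⊔ W₃ ∧ P ≤ Q ⊔ W₃ := by
  obtain ⟨g, hg⟩ := exists_surj_aux K (↥P) (↥Q) hle
  set h : Q →ₗ[K] V := Q.subtype + P.subtype.comp g with hh
  set W₃ := LinearMap.range h with hW₃def
  have hval : ∀ u : Q, h u = (u : V) + (g u : V) := fun u => rfl
  have hmem : ∀ u : Q, (u : V) + (g u : V) ∈ W₃ := fun u => ⟨u, rfl⟩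
  have hzero : ∀ a : V, a ∈ P → a ∈ Q → a = 0 := by
    intro a ha hb
    have : a ∈ P ⊓ Q := ⟨ha, hb⟩
    rwa [hdisj, Submodule.mem_bot] at this
  have hne_bot : W₃ ≠ ⊥ := by
    obtain ⟨q, hqQ, hq0⟩ := Submodule.exists_mem_ne_zero_of_ne_bot hQ
    set u : Q := ⟨q, hqQ⟩
    intro hbot
    have : (u : V) + (g u : V) = 0 := by
      have := hmem u; rwa [hbot, Submodule.mem_bot] at this
    have huP : (u : V) ∈ P := by
      have h2 : (u : V) = -(g u : V) := eq_neg_of_add_eq_zero_left this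
      rw [h2]; exact neg_mem (g u).2
    exact hq0 (hzero q huP hqQ)
  have hWP : W₃ ⊓ P = ⊥ := by
    rw [eq_bot_iff]
    rintro x ⟨⟨u, rfl⟩, hxP⟩
    have huP : (u : V) ∈ P := by
      have : (u : V) = h u - (g u : V) := by rw [hval]; abel
      rw [this]; exact sub_mem hxP (g u).2
    have hu0 : u = 0 := Subtype.ext (hzero _ huP u.2)
    simp [hval, hu0, Submodule.mem_bot]
  have hne_top : W₃ ≠ ⊤ := by
    intro htop
    rw [htop, top_inf_eq] at hWP
    exact hP hWP
  have hneP : W₃ ≠ P := by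
    intro hEq
    apply hne_bot
    rw [← hWP, hEq, inf_idem]
  have hneQ : W₃ ≠ Q := by
    obtain ⟨p, hpP, hp0⟩ := Submodule.exists_mem_ne_zero_of_ne_bot hP
    obtain ⟨u, hu⟩ := hg ⟨p, hpP⟩
    intro hEq
    have hmemQ : (u : V) + (g u : V) ∈ Q := by
      have := hmem u; rwa [hEq] at this
    have hpQ : (g u : V) ∈ Q := by
      have : (g u : V) = ((u : V) + (g u : V)) - (u : V) := by abel
      rw [this]; exact sub_mem hmemQ u.2
    have : (g u : V) = 0 := hzero _ (g u).2 hpQ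
    rw [hu] at this
    exact hp0 this
  refine ⟨W₃, hne_bot, hne_top, hneP, hneQ, ?_, ?_⟩
  · intro q hqQ
    set u : Q := ⟨q, hqQ⟩
    have : q = ((u : V) + (g u : V)) - (g u : V) := by abel
    rw [this]
    exact sub_mem (Submodule.mem_sup_right (hmem u)) (Submodule.mem_sup_left (g u).2)
  · intro p hpP
    obtain ⟨u, hu⟩ := hg ⟨p, hpP⟩
    have : p = ((u : V) + (g u : V)) - (u : V) := by rw [hu]; abel
    rw [this]
    exact sub_mem (Submodule.mem_sup_right (hmem u)) (Submodule.mem_sup_left u.2)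

/-- `G(V)` is triangulated: every nontrivial proper subspace `W₁` of `V` lies on a
triangle, i.e. there are nontrivial proper subspaces `W₂, W₃`, pairwise distinct
from each other and from `W₁`, with `W₁ + W₂ = V`, `W₂ + W₃ = V` and `W₁ + W₃ = V`. -/
theorem subspaceSumGraph_triangulated (K V : Type*) [Field K] [AddCommGroup V]
    [Module K V] [FiniteDimensional K V] (hdim : 1 < finrank K V) :
    ∀ W₁ : Submodule K V, W₁ ≠ ⊥ → W₁ ≠ ⊤ →
      ∃ W₂ W₃ : Submodule K V, W₂ ≠ ⊥ ∧ W₂ ≠ ⊤ ∧ W₃ ≠ ⊥ ∧ W₃ ≠ ⊤ ∧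
        W₁ ≠ W₂ ∧ W₂ ≠ W₃ ∧ W₁ ≠ W₃ ∧
        W₁ ⊔ W₂ = ⊤ ∧ W₂ ⊔ W₃ = ⊤ ∧ W₁ ⊔ W₃ = ⊤ := by
  intro W₁ hbot htop
  obtain ⟨Q, hcompl⟩ := Submodule.exists_isCompl W₁
  have hinf : W₁ ⊓ Q = ⊥ := hcompl.inf_eq_bot
  have hsup : W₁ ⊔ Q = ⊤ := hcompl.sup_eq_top
  have hQbot : Q ≠ ⊥ := by
    intro hq; apply htop; rw [← hsup, hq, sup_bot_eq]
  have hQtop : Q ≠ ⊤ := by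
    intro hq; apply hbot; rw [← hinf, hq, inf_top_eq]
  have hW1Q : W₁ ≠ Q := by
    intro hq; apply hbot; rw [← hinf, ← hq, inf_idem]
  rcases le_total (finrank K W₁) (finrank K Q) with hle | hle
  · obtain ⟨W₃, h1, h2, h3, h4, h5, h6⟩ := triangle_aux W₁ Q hbot hQbot hinf hle
    refine ⟨Q, W₃, hQbot, hQtop, h1, h2, hW1Q, (Ne.symm h4), (Ne.symm h3), hsup, ?_, ?_⟩
    · rw [eq_top_iff, ← hsup]
      exact sup_le h6 le_sup_left
    · rw [eq_top_iff, ← hsup]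
      exact sup_le le_sup_left h5
  · obtain ⟨W₃, h1, h2, h3, h4, h5, h6⟩ := triangle_aux Q W₁ hQbot hbot
      (by rw [inf_comm]; exact hinf) hle
    refine ⟨Q, W₃, hQbot, hQtop, h1, h2, hW1Q, (Ne.symm h3), (Ne.symm h4), hsup, ?_, ?_⟩
    · rw [eq_top_iff, ← hsup]
      exact sup_le h5 le_sup_left
    · rw [eq_top_iff, ← hsup]
      exact sup_le le_sup_left h6
end

section
/- The girth of G(V) is 3, i.e., the length of a shortest cycle in G(V) equals 3. -/
open Module

/-!
Two distinct hyperplanes of `V` sum to `V`, and when `dim V > 1` they are nonzero, hence vertices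
of `G(V)`. Since `dim V ≥ 2`, there are three distinct hyperplanes; they form a triangle, and a
simple graph containing a triangle has girth `3`.
-/

namespace SimpleGraph

variable {α : Type*} {G : SimpleGraph α}

theorem girth_eq_three_of_not_cliqueFree_three (h : ¬G.CliqueFree 3) : G.girth = 3 := by
  have hle : G.egirth ≤ 3 := by
    calc G.egirth ≤ (completeGraph (Fin 3)).egirth :=
          ((not_cliqueFree_iff_top_isContained 3).mp h).egirth_le
      _ = 3 := egirth_top (by simp)
  simp [girth, le_antisymm hle three_le_egirth]

end SimpleGraph

section Hyperplanes

variable {K V : Type*} [Field K] [AddCommGroup V] [Module K V]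

theorem IsCoatom.ne_bot_of_one_lt_finrank {H : Submodule K V} (hH : IsCoatom H)
    (hdim : 1 < finrank K V) : H ≠ ⊥ := by
  rintro rfl
  have : IsSimpleModule K V := (isSimpleModule_iff ..).mpr (isSimpleOrder_iff_isCoatom_bot.mpr hH)
  exact hdim.ne' (isSimpleModule_iff_finrank_eq_one.mp this)

theorem LinearMap.isCoatom_ker_of_apply_eq_one {f : V →ₗ[K] K} {x : V} (hx : f x = 1) :
    IsCoatom (LinearMap.ker f) :=
  LinearMap.isCoatom_ker_of_surjective fun a ↦ ⟨a • x, by simp [hx]⟩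

/-- Take `ker f`, `ker g`, `ker (f + g)` for the first two coordinate functionals `f, g`. -/
theorem exists_three_ne_isCoatom (hdim : 1 < finrank K V) :
    ∃ H₁ H₂ H₃ : Submodule K V, IsCoatom H₁ ∧ IsCoatom H₂ ∧ IsCoatom H₃ ∧
      H₁ ≠ H₂ ∧ H₁ ≠ H₃ ∧ H₂ ≠ H₃ := by
  have : FiniteDimensional K V := Module.finite_of_finrank_pos (by omega)
  let b := finBasis K V
  let i : Fin (finrank K V) := ⟨0, by omega⟩
  let j : Fin (finrank K V) := ⟨1, hdim⟩
  have hij : i ≠ j := by simp [i, j, Fin.ext_iff]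
  set f := b.coord i
  set g := b.coord j
  have hfi : f (b i) = 1 := by simp [f]
  have hfj : f (b j) = 0 := by simp [f, hij]
  have hgi : g (b i) = 0 := by simp [g, hij.symm]
  have hgj : g (b j) = 1 := by simp [g]
  refine ⟨LinearMap.ker f, LinearMap.ker g, LinearMap.ker (f + g),
    LinearMap.isCoatom_ker_of_apply_eq_one hfi, LinearMap.isCoatom_ker_of_apply_eq_one hgj,
    LinearMap.isCoatom_ker_of_apply_eq_one (x := b i) (by simp [hfi, hgi]),
    ?_, ?_, ?_⟩
  · exact ne_of_mem_of_not_mem' (a := b j) hfj (by simp [hgj])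
  · exact ne_of_mem_of_not_mem' (a := b j) hfj (by simp [hfj, hgj])
  · exact ne_of_mem_of_not_mem' (a := b i) hgi (by simp [hfi, hgi])

end Hyperplanes

theorem subspaceSumGraph_adj_of_isCoatom {K V : Type*} [Field K] [AddCommGroup V] [Module K V]
    {W₁ W₂ : {W : Submodule K V // W ≠ ⊥ ∧ W ≠ ⊤}} (h₁ : IsCoatom W₁.1) (h₂ : IsCoatom W₂.1)
    (hne : W₁ ≠ W₂) : (subspaceSumGraph K V).Adj W₁ W₂ :=
  ⟨hne, h₁.sup_eq_top_of_ne h₂ (Subtype.coe_injective.ne hne)⟩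

theorem subspaceSumGraph_girth_general (K V : Type*) [Field K] [AddCommGroup V]
    [Module K V] (hdim : 1 < finrank K V) :
    (subspaceSumGraph K V).girth = 3 := by
  obtain ⟨H₁, H₂, H₃, h₁, h₂, h₃, h₁₂, h₁₃, h₂₃⟩ := exists_three_ne_isCoatom hdim
  let vertex (H : Submodule K V) (hH : IsCoatom H) : {W : Submodule K V // W ≠ ⊥ ∧ W ≠ ⊤} :=
    ⟨H, hH.ne_bot_of_one_lt_finrank hdim, hH.1⟩
  have adj {H H' : Submodule K V} (hH : IsCoatom H) (hH' : IsCoatom H') (hne : H ≠ H') :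
      (subspaceSumGraph K V).Adj (vertex H hH) (vertex H' hH') :=
    subspaceSumGraph_adj_of_isCoatom hH hH' (by simpa [vertex] using hne)
  refine SimpleGraph.girth_eq_three_of_not_cliqueFree_three fun hfree ↦
    hfree {vertex H₁ h₁, vertex H₂ h₂, vertex H₃ h₃} ?_
  exact SimpleGraph.is3Clique_triple_iff.mpr ⟨adj h₁ h₂ h₁₂, adj h₁ h₃ h₁₃, adj h₂ h₃ h₂₃⟩

/-- The girth of `G(V)` (the length of a shortest cycle) equals `3`. -/
theorem subspaceSumGraph_girth (K V : Type*) [Field K] [AddCommGroup V]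
    [Module K V] [FiniteDimensional K V] (hdim : 1 < finrank K V) :
    (subspaceSumGraph K V).girth = 3 :=
  subspaceSumGraph_girth_general K V hdim
end

section
/- Suppose dim V = 2m+1 is odd. Then the collection 𝒲[m] of all nontrivial subspaces of V of dimension at most m is a maximal independent set in G(V): for all W₁, W₂ ∈ 𝒲[m] one has W₁ + W₂ ≠ V, and for every nontrivial proper subspace W of V with dim W > m there exists W' ∈ 𝒲[m] with W + W' = V. -/
open Module

/-- If `dim V = 2m+1` is odd, the collection of all nontrivial subspaces of dimension at
most `m` is a maximal independent set in `G(V)`: no two of them sum to `V`, and every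
nontrivial proper subspace of dimension `> m` sums to `V` with one of them. -/
theorem maximal_independent_set_odd (K V : Type*) [Field K] [AddCommGroup V]
    [Module K V] [FiniteDimensional K V] (m : ℕ) (hm : 1 ≤ m)
    (hdim : finrank K V = 2 * m + 1) :
    (∀ W₁ W₂ : Submodule K V, W₁ ≠ ⊥ → finrank K W₁ ≤ m → W₂ ≠ ⊥ →
      finrank K W₂ ≤ m → W₁ ⊔ W₂ ≠ ⊤) ∧
    (∀ W : Submodule K V, W ≠ ⊤ → m < finrank K W →
      ∃ W' : Submodule K V, W' ≠ ⊥ ∧ finrank K W' ≤ m ∧ W ⊔ W' = ⊤) := by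
  constructor
  · intro W₁ W₂ _ h₁ _ h₂ htop
    have hle := Submodule.finrank_sup_add_finrank_inf_eq W₁ W₂
    rw [htop, finrank_top, hdim] at hle
    omega
  · intro W hW hWm
    obtain ⟨W', hcompl⟩ := Submodule.exists_isCompl W
    refine ⟨W', ?_, ?_, hcompl.sup_eq_top⟩
    · intro hbot
      apply hW
      have := hcompl.sup_eq_top
      rw [hbot, sup_bot_eq] at this
      exact this
    · have hadd : finrank K W + finrank K W' = finrank K V :=
        Submodule.finrank_add_eq_of_isCompl hcompl
      omega
end

section
/- Suppose dim V = 2m is even and let α be a nonzero vector of V. Let 𝒲[m−1] be the collection of all nontrivial subspaces of V of dimension at most m−1, and let 𝒲^α[m] be the collection of all m-dimensional subspaces of V containing α. Then 𝒲[m−1] ∪ 𝒲^α[m] is a maximal independent set in G(V): any two members W₁, W₂ of this collection satisfy W₁ + W₂ ≠ V, and every nontrivial proper subspace W of V not in the collection satisfies W + W' = V for some W' in the collection. -/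
/-!
Everything is a dimension count based on `dim (W₁ + W₂) + dim (W₁ ∩ W₂) = dim W₁ + dim W₂`.
Two members of the collection have dimensions adding up to less than `2m`, unless both are
`m`-dimensional and contain `α`, in which case they meet nontrivially; either way their sum is
proper. A nontrivial proper subspace `W` outside the collection has `dim W > m`, or `dim W = m`
and `α ∉ W`. In the first case any complement of `W` is a member; in the second, a complement
of `W` can be chosen to contain `α`, and it is then a member of dimension `m`.
-/

open Module

namespace Submodule

variable {K V : Type*} [DivisionRing K] [AddCommGroup V] [Module K V]

theorem finrank_add_finrank_inf_eq_of_sup_eq_top [FiniteDimensional K V]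
    {W₁ W₂ : Submodule K V} (h : W₁ ⊔ W₂ = ⊤) :
    finrank K V + finrank K ↥(W₁ ⊓ W₂) = finrank K W₁ + finrank K W₂ := by
  rw [← finrank_sup_add_finrank_inf_eq, h, finrank_top]

theorem finrank_pos_of_mem [FiniteDimensional K V] {W : Submodule K V} {x : V}
    (hx : x ∈ W) (hx₀ : x ≠ 0) : 0 < finrank K W :=
  finrank_pos_iff_exists_ne_zero.mpr ⟨⟨x, hx⟩, by simpa using hx₀⟩

theorem exists_mem_isCompl_of_notMem {W : Submodule K V} {x : V} (hx : x ∉ W) :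
    ∃ C : Submodule K V, x ∈ C ∧ IsCompl W C := by
  have hdisj : Disjoint (K ∙ x) W :=
    (disjoint_span_singleton.mpr fun h => absurd h hx).symm
  obtain ⟨C, hxC, hC⟩ := hdisj.exists_isCompl
  exact ⟨C, hxC (mem_span_singleton_self x), hC.symm⟩

end Submodule

/-- If `dim V = 2m` is even and `α ≠ 0`, then the union of the collection of all
nontrivial subspaces of dimension at most `m-1` and the collection of all `m`-dimensional
subspaces containing `α` is a maximal independent set in `G(V)`: no two members sum to
`V`, and every nontrivial proper subspace outside the collection sums to `V` with some
member. -/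
theorem maximal_independent_set_even (K V : Type*) [Field K] [AddCommGroup V]
    [Module K V] [FiniteDimensional K V] (m : ℕ) (hm : 1 ≤ m)
    (hdim : finrank K V = 2 * m) (α : V) (hα : α ≠ 0)
    (S : Set (Submodule K V))
    (hS : S = {W : Submodule K V | (W ≠ ⊥ ∧ finrank K W ≤ m - 1) ∨
      (finrank K W = m ∧ α ∈ W)}) :
    (∀ W₁ ∈ S, ∀ W₂ ∈ S, W₁ ⊔ W₂ ≠ ⊤) ∧
    (∀ W : Submodule K V, W ≠ ⊥ → W ≠ ⊤ → W ∉ S →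
      ∃ W' ∈ S, W ⊔ W' = ⊤) := by
  subst hS
  refine ⟨fun W₁ h₁ W₂ h₂ htop => ?_, fun W hbot htop hW => ?_⟩
  · have hsum := Submodule.finrank_add_finrank_inf_eq_of_sup_eq_top htop
    rcases h₁ with ⟨-, h₁⟩ | ⟨h₁, hα₁⟩ <;> rcases h₂ with ⟨-, h₂⟩ | ⟨h₂, hα₂⟩
    · omega
    · omega
    · omega
    · have := Submodule.finrank_pos_of_mem (show α ∈ W₁ ⊓ W₂ from ⟨hα₁, hα₂⟩) hα
      omega
  · simp only [Set.mem_ofPred_eq, not_or, not_and] at hW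
    have hge : m ≤ finrank K W := by have := hW.1 hbot; omega
    rcases hge.eq_or_lt with heq | hgt
    · obtain ⟨C, hαC, hC⟩ := Submodule.exists_mem_isCompl_of_notMem (hW.2 heq.symm)
      have := Submodule.finrank_add_eq_of_isCompl hC
      exact ⟨C, Or.inr ⟨by omega, hαC⟩, hC.sup_eq_top⟩
    · obtain ⟨C, hC⟩ := Submodule.exists_isCompl W
      have := Submodule.finrank_add_eq_of_isCompl hC
      have hC₀ : C ≠ ⊥ := fun h => htop (eq_top_of_isCompl_bot (h ▸ hC))
      exact ⟨C, Or.inl ⟨hC₀, by omega⟩, hC.sup_eq_top⟩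
end

section
/- The minimum degree of G(V) equals q^{n−1}: every one-dimensional subspace of V has degree exactly q^{n−1} in G(V), and every nontrivial proper subspace of V has degree at least q^{n−1} in G(V). -/
/-!
If `W` is a line, a subspace `W'` with `W ⊔ W' = V` and `W' ≠ V` cannot contain `W`, so it meets
`W` trivially: the neighbours of `W` are exactly its complements. Complements of `W` are kernels
of projections onto `W`, and fixing one complement `H`, these projections form a torsor under
`H →ₗ W`; hence a subspace of dimension `k` has `q ^ (k (n - k))` complements, and a line has
`q ^ (n - 1)`. Any nonzero `W` contains a line, and every neighbour of that line is a neighbour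
of `W`.
-/

open Module

section Lattice

variable {α : Type*} [Lattice α] [BoundedOrder α]

def sumGraphNeighborSet (a : α) : Set α :=
  {b | b ≠ ⊥ ∧ b ≠ ⊤ ∧ a ⊔ b = ⊤}

theorem sumGraphNeighborSet_mono {a a' : α} (h : a ≤ a') :
    sumGraphNeighborSet a ⊆ sumGraphNeighborSet a' :=
  fun _ ⟨hb_bot, hb_top, hab⟩ => ⟨hb_bot, hb_top, top_le_iff.1 (hab ▸ sup_le_sup_right h _)⟩

theorem IsAtom.sumGraphNeighborSet_eq {a : α} (ha : IsAtom a) (ha_top : a ≠ ⊤) :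
    sumGraphNeighborSet a = {b | IsCompl a b} := by
  ext b
  constructor
  · rintro ⟨-, hb_top, hab⟩
    refine ⟨ha.not_le_iff_disjoint.1 fun hle => hb_top ?_, codisjoint_iff.2 hab⟩
    rwa [sup_eq_right.2 hle] at hab
  · intro h
    refine ⟨?_, ?_, h.sup_eq_top⟩
    · rintro rfl
      exact ha_top (eq_top_of_isCompl_bot h)
    · rintro rfl
      exact ha.ne_bot (eq_bot_of_isCompl_top h)

end Lattice

namespace Submodule

variable {R V : Type*} [Ring R] [AddCommGroup V] [Module R V]

instance finite_of_finite [Finite V] : Finite (Submodule R V) :=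
  Finite.of_injective _ SetLike.coe_injective

/-- Projections onto `W` differ from the projection along `H` by a map that vanishes on `W`,
i.e. by a map `H →ₗ W`. -/
noncomputable def projEquivLinearMapOfIsCompl (W H : Submodule R V) (h : IsCompl W H) :
    {f : V →ₗ[R] W // ∀ x : W, f x = x} ≃ (H →ₗ[R] W) where
  toFun f := (f : V →ₗ[R] W).comp H.subtype
  invFun g := ⟨W.projectionOnto H h + g.comp (H.projectionOnto W h.symm), fun x => by
    simp [projectionOnto_apply_of_mem_right h.symm x.2]⟩
  left_inv := by
    rintro ⟨f, hf⟩
    ext v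
    have hv := congrArg f (projection_add_projection_eq_self h v)
    simp only [map_add, projection, LinearMap.comp_apply, Submodule.subtype_apply, hf] at hv
    simpa using congrArg Subtype.val hv
  right_inv g := by
    ext x
    simp [projectionOnto_apply_of_mem_right h x.2]

theorem natCard_isCompl_eq (W H : Submodule R V) (h : IsCompl W H) :
    Nat.card {W' // IsCompl W W'} = Nat.card (H →ₗ[R] W) :=
  Nat.card_congr (W.isComplEquivProj.trans (projEquivLinearMapOfIsCompl W H h))

end Submodule

theorem Submodule.natCard_isCompl {K V : Type*} [Field K] [Finite K] [AddCommGroup V]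
    [Module K V] [FiniteDimensional K V] (W : Submodule K V) :
    Nat.card {W' // IsCompl W W'} = Nat.card K ^ (finrank K W * (finrank K V - finrank K W)) := by
  obtain ⟨H, hH⟩ := W.exists_isCompl
  have hH_rank : finrank K H = finrank K V - finrank K W := by
    have := finrank_add_eq_of_isCompl hH
    omega
  rw [natCard_isCompl_eq W H hH, natCard_eq_pow_finrank (K := K), finrank_linearMap, hH_rank,
    mul_comm]

/-- The minimum degree of `G(V)` equals `q^{n-1}`: every one-dimensional subspace has
degree exactly `q^{n-1}` and every nontrivial proper subspace has degree at least
`q^{n-1}`, where `q` is the size of the base field and `n = dim V`. -/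
theorem min_degree_eq (K V : Type*) [Field K] [Fintype K] [AddCommGroup V]
    [Module K V] [FiniteDimensional K V] (n q : ℕ) (hq : Fintype.card K = q)
    (hn : 2 ≤ n) (hdim : finrank K V = n) :
    (∀ W : Submodule K V, finrank K W = 1 →
      Set.ncard {W' : Submodule K V | W' ≠ ⊥ ∧ W' ≠ ⊤ ∧ W ⊔ W' = ⊤} = q ^ (n - 1)) ∧
    (∀ W : Submodule K V, W ≠ ⊥ → W ≠ ⊤ →
      q ^ (n - 1) ≤ Set.ncard {W' : Submodule K V | W' ≠ ⊥ ∧ W' ≠ ⊤ ∧ W ⊔ W' = ⊤}) := by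
  have : Finite V := Module.finite_of_finite K
  have line_degree (W : Submodule K V) (hW : finrank K W = 1) :
      (sumGraphNeighborSet W).ncard = q ^ (n - 1) := by
    have hW_top : W ≠ ⊤ := fun h => by rw [h, finrank_top] at hW; omega
    rw [(Submodule.isAtom_iff_finrank_eq_one.2 hW).sumGraphNeighborSet_eq hW_top,
      ← Nat.card_coe_set_eq, Set.coe_ofPred, W.natCard_isCompl, hW, hdim, one_mul,
      Nat.card_eq_fintype_card, hq]
  refine ⟨line_degree, fun W hW_bot _ => ?_⟩
  obtain ⟨L, hL, hLW⟩ := (eq_bot_or_exists_atom_le W).resolve_left hW_bot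
  calc q ^ (n - 1) = (sumGraphNeighborSet L).ncard :=
        (line_degree L (Submodule.isAtom_iff_finrank_eq_one.1 hL)).symm
    _ ≤ (sumGraphNeighborSet W).ncard :=
        Set.ncard_le_ncard (sumGraphNeighborSet_mono hLW) (Set.toFinite _)
end

section
/- The chromatic number of G(V) equals 1 + q + q² + ⋯ + q^{n−1} = (qⁿ − 1)/(q − 1); in particular G(V) is weakly perfect (its chromatic number equals its clique number). -/
open Module
open scoped LinearAlgebra.Projectivization

theorem SimpleGraph.IsClique.chromaticNumber_eq_card {α : Type*} {G : SimpleGraph α}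
    {s : Finset α} (hs : G.IsClique s) (hc : G.Colorable s.card) :
    G.chromaticNumber = s.card :=
  le_antisymm hc.chromaticNumber_le hs.card_le_chromaticNumber

namespace Submodule

variable {K V : Type*} [Field K] [AddCommGroup V] [Module K V]

theorem finrank_eq_one_of_isCoatom_bot (h : IsCoatom (⊥ : Submodule K V)) : finrank K V = 1 := by
  rw [← finrank_top, ← isAtom_iff_finrank_eq_one, ← bot_covBy_iff]
  exact covBy_top_iff.2 h

variable (K V) [FiniteDimensional K V]

noncomputable def coatomEquivProjectivizationDual :
    {H : Submodule K V // IsCoatom H} ≃ ℙ K (Dual K V) :=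
  (Subspace.orderIsoFiniteDimensional.toEquiv.trans OrderDual.ofDual).subtypeEquiv
    (fun _ => by simp [← isCoatom_dual_iff_isAtom]) |>.trans <|
  (Equiv.subtypeEquivRight fun _ => isAtom_iff_finrank_eq_one).trans
    (Projectivization.equivSubmodule K (Dual K V)).symm

theorem natCard_coatoms_eq_geom_sum [Finite K] :
    Nat.card {H : Submodule K V // IsCoatom H} =
      ∑ i ∈ Finset.range (finrank K V), Nat.card K ^ i := by
  rw [Nat.card_congr (coatomEquivProjectivizationDual K V),
    Projectivization.card_of_finrank K _ Subspace.dual_finrank_eq]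

end Submodule

namespace subspaceSumGraph

variable {K V : Type*} [Field K] [AddCommGroup V] [Module K V]

theorem isClique_coatoms :
    (subspaceSumGraph K V).IsClique {W | IsCoatom W.1} :=
  fun _ hW₁ _ hW₂ hne => ⟨hne, hW₁.sup_eq_top_of_ne hW₂ (Subtype.coe_injective.ne hne)⟩

theorem nonempty_coloring_coatoms :
    Nonempty ((subspaceSumGraph K V).Coloring {H : Submodule K V // IsCoatom H}) := by
  have hle (W : {W : Submodule K V // W ≠ ⊥ ∧ W ≠ ⊤}) : ∃ H : {H // IsCoatom H}, W.1 ≤ H :=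
    let ⟨H, hH, hWH⟩ := (eq_top_or_exists_le_coatom W.1).resolve_left W.2.2
    ⟨⟨H, hH⟩, hWH⟩
  choose c hc using hle
  exact ⟨.mk c fun {W₁ W₂} hadj heq =>
    (c W₁).2.1 <| top_le_iff.1 <| hadj.2 ▸ sup_le (hc W₁) (heq ▸ hc W₂)⟩

theorem natCard_coatom_vertices (h : finrank K V ≠ 1) :
    Nat.card {W : {W : Submodule K V // W ≠ ⊥ ∧ W ≠ ⊤} // IsCoatom W.1} =
      Nat.card {H : Submodule K V // IsCoatom H} :=
  Nat.card_congr <| Equiv.subtypeSubtypeEquivSubtype fun hH =>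
    ⟨fun hbot => h (Submodule.finrank_eq_one_of_isCoatom_bot (hbot ▸ hH)), hH.1⟩

end subspaceSumGraph

/-- The chromatic number of `G(V)` equals `1 + q + q² + ⋯ + q^{n-1} = (qⁿ - 1)/(q - 1)`,
where `q` is the size of the base field and `n = dim V ≥ 2`; in particular `G(V)` is
weakly perfect (its chromatic number equals its clique number). -/
theorem chromaticNumber_eq (K V : Type*) [Field K] [Fintype K] [AddCommGroup V]
    [Module K V] [FiniteDimensional K V] (n q : ℕ) (hq : Fintype.card K = q)
    (hn : 2 ≤ n) (hdim : finrank K V = n) :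
    (subspaceSumGraph K V).chromaticNumber = ((∑ i ∈ Finset.range n, q ^ i : ℕ) : ℕ∞) ∧
    (subspaceSumGraph K V).chromaticNumber = (((q ^ n - 1) / (q - 1) : ℕ) : ℕ∞) ∧
    (subspaceSumGraph K V).chromaticNumber = ((subspaceSumGraph K V).cliqueNum : ℕ∞) := by
  classical
  have : Finite V := Module.finite_of_finite K
  have : Fintype {W : Submodule K V // W ≠ ⊥ ∧ W ≠ ⊤} := .ofFinite _
  have : Fintype {H : Submodule K V // IsCoatom H} := .ofFinite _
  let hyperplanes : Finset {W : Submodule K V // W ≠ ⊥ ∧ W ≠ ⊤} := {W | IsCoatom W.1}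
  have hcard : hyperplanes.card = Fintype.card {H : Submodule K V // IsCoatom H} := by
    rw [← Fintype.card_subtype, Fintype.card_eq_nat_card, Fintype.card_eq_nat_card,
      subspaceSumGraph.natCard_coatom_vertices (by omega)]
  have hclique : (subspaceSumGraph K V).IsClique hyperplanes :=
    subspaceSumGraph.isClique_coatoms.subset (by simp [hyperplanes])
  obtain ⟨C⟩ := subspaceSumGraph.nonempty_coloring_coatoms (K := K) (V := V)
  have hchrom := hclique.chromaticNumber_eq_card (hcard ▸ C.colorable)
  have hsum : hyperplanes.card = ∑ i ∈ Finset.range n, q ^ i := by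
    rw [hcard, Fintype.card_eq_nat_card, Submodule.natCard_coatoms_eq_geom_sum,
      Nat.card_eq_fintype_card, hq, hdim]
  refine ⟨hsum ▸ hchrom, by rw [hchrom, hsum, Nat.geomSum_eq (hq ▸ Fintype.one_lt_card)], ?_⟩
  refine le_antisymm ?_ SimpleGraph.cliqueNum_le_chromaticNumber
  exact hchrom ▸ Nat.cast_le.2 (SimpleGraph.IsClique.card_le_cliqueNum (tc := hclique))
end

section
/- If dim V ≥ 4, then G(V) contains an induced cycle of length 5: there exist five pairwise distinct nontrivial proper subspaces W₁, W₂, W₃, W₄, W₅ of V such that Wᵢ + Wᵢ₊₁ = V for i = 1,2,3,4, W₅ + W₁ = V, and all other pairs Wᵢ, Wⱼ satisfy Wᵢ + Wⱼ ≠ V; consequently G(V) is not perfect. -/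
open Module

/-- The clique number of a graph, as an extended natural number: the supremum of the
sizes of its cliques. -/
noncomputable def cliqueNumE {α : Type*} (G : SimpleGraph α) : ℕ∞ :=
  sSup ((fun m : ℕ => (m : ℕ∞)) '' {m | ∃ s : Finset α, G.IsNClique m s})

/-- A graph is perfect if for every induced subgraph the chromatic number equals the
clique number. -/
def SimpleGraph.IsPerfect {α : Type*} (G : SimpleGraph α) : Prop :=
  ∀ s : Set α, (G.induce s).chromaticNumber = cliqueNumE (G.induce s)


/-! The five sides of a pentagon `p₀ … p₄` in general position in a `4`-dimensional space (any
four vertices span, e.g. `e₁, e₂, e₃, e₄, e₁ + e₂ + e₃ + e₄`) are planes in which two adjacent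
sides meet in a line (their sum is `3`-dimensional), while two non-adjacent sides have four
distinct vertices and therefore span the space. Listing the sides as a pentagram,
`p₀p₁, p₂p₃, p₄p₀, p₁p₂, p₃p₄`, gives an induced `5`-cycle of the subspace sum graph of `K⁴`, and
pulling back along a surjection `V → K⁴` embeds that graph as an induced subgraph of `G(V)`.
An induced odd cycle of length `≥ 5` has chromatic number `3` but clique number `2`, so `G(V)` is
not perfect. -/

theorem cliqueNumE_le_of_cliqueFree {α : Type*} {G : SimpleGraph α} {n : ℕ}
    (h : G.CliqueFree (n + 1)) : cliqueNumE G ≤ n := by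
  refine sSup_le ?_
  rintro _ ⟨m, ⟨s, hs⟩, rfl⟩
  by_contra! hnm
  exact h.mono (by exact_mod_cast hnm) s hs

namespace SimpleGraph

theorem cycleGraph_cliqueFree_three {n : ℕ} (hn : 4 ≤ n) : (cycleGraph n).CliqueFree 3 := by
  obtain ⟨m, rfl⟩ : ∃ m, n = m + 4 := ⟨n - 4, by omega⟩
  have h1 : (1 : Fin (m + 4)) ≠ 0 := one_ne_zero
  have h3 : (3 : Fin (m + 4)) ≠ 0 := by
    rw [Ne, Fin.ext_iff]
    simp [Nat.mod_eq_of_lt (show 3 < m + 4 by omega)]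
  intro s hs
  obtain ⟨a, b, c, hab, hac, hbc, rfl⟩ := is3Clique_iff.1 hs
  rw [cycleGraph_adj] at hab hac hbc
  -- `a - c = (a - b) + (b - c)` with all three equal to `±1` forces `1 = 0` or `3 = 0`
  grind

theorem not_isPerfect_of_cycleGraph_isIndContained {α : Type*} {G : SimpleGraph α} {n : ℕ}
    (hn : 5 ≤ n) (hodd : Odd n) (h : cycleGraph n ⊴ G) : ¬ G.IsPerfect := by
  obtain ⟨e⟩ := h
  intro hperf
  have hiso := e.isoInduceRange
  have hχ := hperf (Set.range e)
  rw [← chromaticNumber_congr hiso, chromaticNumber_cycleGraph_of_odd n (by omega) hodd] at hχ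
  have hω : cliqueNumE (G.induce (Set.range e)) ≤ 2 :=
    cliqueNumE_le_of_cliqueFree ((cycleGraph_cliqueFree_three (by omega)).comap hiso.isContained')
  rw [← hχ] at hω
  exact absurd hω (by norm_num)

end SimpleGraph

namespace Submodule
variable {K M N : Type*} [Field K] [AddCommGroup M] [Module K M] [AddCommGroup N] [Module K N]

theorem comap_sup_of_surjective {f : M →ₗ[K] N} (hf : Function.Surjective f)
    (p q : Submodule K N) : comap f (p ⊔ q) = comap f p ⊔ comap f q := by
  conv_lhs => rw [← map_sup_comap_of_surjective hf p q]
  rw [comap_map_eq, sup_eq_left]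
  exact (LinearMap.ker_le_comap f).trans le_sup_left

theorem span_image_ne_top_of_card_lt_finrank {ι : Type*} (p : ι → N) {s : Finset ι}
    (hs : s.card < Module.finrank K N) : span K (p '' s) ≠ ⊤ := by
  classical
  intro htop
  have hle := finrank_span_finset_le_card (R := K) (s.image p)
  rw [Set.finrank, Finset.coe_image, htop, finrank_top] at hle
  exact (hle.trans Finset.card_image_le).not_gt hs

end Submodule

theorem Module.Basis.span_image_cons_sum_compl_eq_top {K N : Type*} [Field K] [AddCommGroup N]
    [Module K N] {n : ℕ} (b : Basis (Fin n) K N) (i : Fin (n + 1)) :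
    Submodule.span K ((Fin.cons (∑ j, b j) b : Fin (n + 1) → N) '' {i}ᶜ) = ⊤ := by
  set S := Submodule.span K ((Fin.cons (∑ j, b j) b : Fin (n + 1) → N) '' {i}ᶜ)
  have mem : ∀ l ≠ i, (Fin.cons (∑ j, b j) b : Fin (n + 1) → N) l ∈ S :=
    fun l hl => Submodule.subset_span ⟨l, hl, rfl⟩
  rw [eq_top_iff, ← b.span_eq, Submodule.span_le]
  rintro _ ⟨k, rfl⟩
  by_cases hk : k.succ = i
  · have hsum : ∑ j, b j ∈ S := mem 0 (hk ▸ (Fin.succ_ne_zero k).symm)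
    have hrest : ∑ j ∈ Finset.univ.erase k, b j ∈ S := Submodule.sum_mem _ fun j hj =>
      by simpa using mem j.succ (hk ▸ (Fin.succ_injective _).ne (Finset.ne_of_mem_erase hj))
    rw [← Finset.add_sum_erase _ _ (Finset.mem_univ k)] at hsum
    simpa using S.sub_mem hsum hrest
  · simpa using mem k.succ hk

namespace subspaceSumGraph

variable {K V W : Type*} [Field K] [AddCommGroup V] [Module K V] [AddCommGroup W] [Module K W]

theorem adj_iff {U₁ U₂ : {U : Submodule K V // U ≠ ⊥ ∧ U ≠ ⊤}} :
    (subspaceSumGraph K V).Adj U₁ U₂ ↔ (U₁ : Submodule K V) ⊔ U₂ = ⊤ := by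
  refine ⟨And.right, fun h => ⟨?_, h⟩⟩
  rintro rfl
  exact U₁.2.2 (by rwa [sup_idem] at h)

def comapEmbedding (f : V →ₗ[K] W) (hf : Function.Surjective f) :
    subspaceSumGraph K W ↪g subspaceSumGraph K V where
  toFun U := ⟨U.1.comap f,
    fun h => U.2.1 (by rw [← Submodule.map_comap_eq_of_surjective hf U.1, h, Submodule.map_bot]),
    fun h => U.2.2 (Submodule.comap_injective_of_surjective hf (by rw [h, Submodule.comap_top]))⟩
  inj' U₁ U₂ h := Subtype.ext (Submodule.comap_injective_of_surjective hf (congrArg Subtype.val h))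
  map_rel_iff' {U₁ U₂} := by
    rw [adj_iff, adj_iff]
    change U₁.1.comap f ⊔ U₂.1.comap f = ⊤ ↔ _
    rw [← Submodule.comap_sup_of_surjective hf, ← Submodule.comap_top f,
      (Submodule.comap_injective_of_surjective hf).eq_iff]

section

variable {α : Type*} {H : SimpleGraph α}

def ofSupEqTopIff (f : α → Submodule K V) (hf : ∀ i j, f i ⊔ f j = ⊤ ↔ H.Adj i j)
    (hH : ∀ i j, (∀ k, H.Adj i k ↔ H.Adj j k) → i = j) (hH' : ∀ i, ∃ j, H.Adj i j) :
    H ↪g subspaceSumGraph K V where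
  toFun i := ⟨f i,
    fun h => by
      obtain ⟨j, hj⟩ := hH' i
      exact H.irrefl ((hf j j).1 (by simpa [h] using (hf i j).2 hj)),
    fun h => H.irrefl ((hf i i).1 (by rw [h, top_sup_eq]))⟩
  inj' i j h := hH i j fun k => by rw [← hf, ← hf, show f i = f j from congrArg Subtype.val h]
  map_rel_iff' {i j} := adj_iff.trans (hf i j)

theorem sup_eq_top_iff_of_embedding (e : H ↪g subspaceSumGraph K V) (i j : α) :
    (e i : Submodule K V) ⊔ e j = ⊤ ↔ H.Adj i j :=
  adj_iff.symm.trans e.map_adj_iff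

end

end subspaceSumGraph

section Pentagram

variable {K N : Type*} [Field K] [AddCommGroup N] [Module K N]

variable (K) in
def pentagram (p : Fin 5 → N) (k : Fin 5) : Submodule K N :=
  Submodule.span K (p '' {2 * k, 2 * k + 1})

theorem pentagram_sup_eq_top_iff {p : Fin 5 → N} (hN : 4 ≤ finrank K N)
    (hp : ∀ i, Submodule.span K (p '' {i}ᶜ) = ⊤) (k l : Fin 5) :
    pentagram K p k ⊔ pentagram K p l = ⊤ ↔ (SimpleGraph.cycleGraph 5).Adj k l := by
  have hsides : p '' {2 * k, 2 * k + 1} ∪ p '' {2 * l, 2 * l + 1} =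
      p '' ↑({2 * k, 2 * k + 1, 2 * l, 2 * l + 1} : Finset (Fin 5)) := by
    simp only [← Set.image_union, Finset.coe_insert, Finset.coe_singleton, Set.insert_union,
      Set.singleton_union]
  rw [pentagram, pentagram, ← Submodule.span_union, hsides]
  constructor
  · contrapose
    intro hkl
    have hcard : ({2 * k, 2 * k + 1, 2 * l, 2 * l + 1} : Finset (Fin 5)).card < 4 := by
      clear hsides; revert k l; decide
    exact Submodule.span_image_ne_top_of_card_lt_finrank p (hcard.trans_le hN)
  · intro hkl
    obtain ⟨i, hi⟩ :
        ∃ i, ∀ j ≠ i, j ∈ ({2 * k, 2 * k + 1, 2 * l, 2 * l + 1} : Finset (Fin 5)) := by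
      clear hsides; revert k l; decide
    rw [eq_top_iff, ← hp i]
    exact Submodule.span_mono (Set.image_mono fun j hj => hi j hj)

end Pentagram

open SimpleGraph in
theorem cycleGraph_five_isIndContained_subspaceSumGraph {K V : Type*} [Field K] [AddCommGroup V]
    [Module K V] [FiniteDimensional K V] (hdim : 4 ≤ finrank K V) :
    cycleGraph 5 ⊴ subspaceSumGraph K V := by
  let b := Pi.basisFun K (Fin 4)
  have hπ : Function.Surjective
      (LinearMap.funLeft K K (Fin.castLE hdim) ∘ₗ (Module.finBasis K V).equivFun.toLinearMap) :=
    (LinearMap.funLeft_surjective_of_injective K K _ (Fin.castLE_injective hdim)).comp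
      (Module.finBasis K V).equivFun.surjective
  exact ⟨(subspaceSumGraph.ofSupEqTopIff (pentagram K (Fin.cons (∑ j, b j) b))
    (pentagram_sup_eq_top_iff (by simp) b.span_image_cons_sum_compl_eq_top)
    (by decide) (by decide)).trans (subspaceSumGraph.comapEmbedding _ hπ)⟩

/-- If `dim V ≥ 4`, then `G(V)` contains an induced cycle of length `5`: five pairwise
distinct nontrivial proper subspaces, consecutive ones (cyclically) summing to `V` and
non-consecutive ones not summing to `V`; consequently `G(V)` is not perfect. -/
theorem not_perfect_of_dim_ge_four (K V : Type*) [Field K] [AddCommGroup V]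
    [Module K V] [FiniteDimensional K V] (hdim : 4 ≤ finrank K V) :
    (∃ W₁ W₂ W₃ W₄ W₅ : Submodule K V,
      (W₁ ≠ ⊥ ∧ W₁ ≠ ⊤) ∧ (W₂ ≠ ⊥ ∧ W₂ ≠ ⊤) ∧ (W₃ ≠ ⊥ ∧ W₃ ≠ ⊤) ∧
      (W₄ ≠ ⊥ ∧ W₄ ≠ ⊤) ∧ (W₅ ≠ ⊥ ∧ W₅ ≠ ⊤) ∧
      W₁ ≠ W₂ ∧ W₁ ≠ W₃ ∧ W₁ ≠ W₄ ∧ W₁ ≠ W₅ ∧ W₂ ≠ W₃ ∧ W₂ ≠ W₄ ∧ W₂ ≠ W₅ ∧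
      W₃ ≠ W₄ ∧ W₃ ≠ W₅ ∧ W₄ ≠ W₅ ∧
      W₁ ⊔ W₂ = ⊤ ∧ W₂ ⊔ W₃ = ⊤ ∧ W₃ ⊔ W₄ = ⊤ ∧ W₄ ⊔ W₅ = ⊤ ∧ W₅ ⊔ W₁ = ⊤ ∧
      W₁ ⊔ W₃ ≠ ⊤ ∧ W₁ ⊔ W₄ ≠ ⊤ ∧ W₂ ⊔ W₄ ≠ ⊤ ∧ W₂ ⊔ W₅ ≠ ⊤ ∧ W₃ ⊔ W₅ ≠ ⊤) ∧
    ¬ (subspaceSumGraph K V).IsPerfect := by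
  have hC₅ := cycleGraph_five_isIndContained_subspaceSumGraph hdim
  refine ⟨?_, SimpleGraph.not_isPerfect_of_cycleGraph_isIndContained le_rfl (by decide) hC₅⟩
  obtain ⟨e⟩ := hC₅
  refine ⟨e 0, e 1, e 2, e 3, e 4, (e 0).2, (e 1).2, (e 2).2, (e 3).2, (e 4).2, ?_⟩
  simp only [ne_eq, Subtype.val_inj, e.injective.eq_iff,
    subspaceSumGraph.sup_eq_top_iff_of_embedding]
  decide
end

section
/- If dim V = 3, then neither G(V) nor its complement contains an induced odd cycle of length at least 5: there do not exist pairwise distinct nontrivial proper subspaces W₁, …, W_{2k+1} of V (k ≥ 2) such that consecutive subspaces (cyclically) are adjacent in G(V) and all non-consecutive pairs are non-adjacent, and likewise with adjacency replaced by non-adjacency; consequently, by the Strong Perfect Graph Theorem, G(V) is perfect. -/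
open Module

/-- A graph `G` has an induced odd cycle of length at least `5` if there are
`2k+1 ≥ 5` pairwise distinct vertices, cyclically consecutive ones adjacent and
all non-consecutive ones non-adjacent. -/
def HasInducedOddCycleGeFive {α : Type*} (G : SimpleGraph α) : Prop :=
  ∃ (k : ℕ), 2 ≤ k ∧ ∃ W : Fin (2 * k + 1) → α,
    Function.Injective W ∧
    (∀ i : Fin (2 * k + 1), G.Adj (W i) (W (i + 1))) ∧
    (∀ i j : Fin (2 * k + 1), j ≠ i → j ≠ i + 1 → i ≠ j + 1 → ¬ G.Adj (W i) (W j))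

/-! In dimension 3 the nontrivial proper subspaces are lines and planes. Two distinct planes
always sum to `V` and two lines never do, so `G(V)` is a split graph: the planes form a clique
and the lines an independent set. In an induced cycle of length at least 4 of a split graph,
the two cycle-neighbours of an independent vertex would be adjacent clique vertices; complements
of split graphs are split. For `χ = ω`, colour each vertex outside the clique like a
non-neighbour inside it; a vertex without such a non-neighbour enlarges the clique by one and
all such vertices can share one new colour. -/

open Finset

namespace SimpleGraph

variable {α : Type*} {G : SimpleGraph α}

def IsSplit (G : SimpleGraph α) : Prop :=
  ∃ C : Set α, G.IsClique C ∧ G.IsIndepSet Cᶜ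

theorem IsSplit.compl (h : G.IsSplit) : Gᶜ.IsSplit := by
  obtain ⟨C, hC, hI⟩ := h
  exact ⟨Cᶜ, G.isClique_compl.2 hI, by rwa [compl_compl, isIndepSet_compl]⟩

theorem IsSplit.not_hasInducedOddCycleGeFive (h : G.IsSplit) : ¬ HasInducedOddCycleGeFive G := by
  obtain ⟨C, hC, hI⟩ := h
  rintro ⟨k, hk, W, hinj, hadj, hnadj⟩
  have ne_self (j : Fin (2 * k + 1)) : j + 1 ≠ j ∧ j + 1 + 1 ≠ j ∧ j + 1 + 1 + 1 ≠ j := by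
    refine ⟨?_, ?_, ?_⟩
    · simp [Fin.ext_iff]
      omega
    · simp [add_assoc, Fin.ext_iff, Fin.val_add, Nat.mod_eq_of_lt (show 2 < 2 * k + 1 by omega)]
    · simp [add_assoc, Fin.ext_iff, Fin.val_add, Nat.mod_eq_of_lt (show 3 < 2 * k + 1 by omega)]
  have not_adj_two (j : Fin (2 * k + 1)) : ¬ G.Adj (W j) (W (j + 1 + 1)) :=
    hnadj _ _ (ne_self j).2.1 (ne_self (j + 1)).1 (ne_self j).2.2.symm
  have not_mem_two (j : Fin (2 * k + 1)) (hj : W j ∈ C) : W (j + 1 + 1) ∉ C := fun h =>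
    not_adj_two j (hC hj h (hinj.ne (ne_self j).2.1.symm))
  have mem_succ (j : Fin (2 * k + 1)) (hj : W j ∉ C) : W (j + 1) ∈ C := by
    by_contra h
    exact hI hj h (hinj.ne (ne_self j).1.symm) (hadj j)
  -- Both cycle-neighbours of an independent vertex lie in the clique, but are two steps apart.
  have mem_all (j : Fin (2 * k + 1)) : W (j + 1) ∈ C := by
    by_contra h
    have hj : W j ∈ C := by
      by_contra h'
      exact h (mem_succ j h')
    exact not_mem_two j hj (mem_succ _ h)
  exact not_mem_two (0 + 1) (mem_all 0) (mem_all (0 + 1 + 1))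

theorem cliqueNumE_le_chromaticNumber (G : SimpleGraph α) : cliqueNumE G ≤ G.chromaticNumber := by
  refine sSup_le ?_
  rintro _ ⟨m, ⟨t, ht⟩, rfl⟩
  simpa [ht.card_eq] using ht.isClique.card_le_chromaticNumber

theorem IsClique.card_le_cliqueNumE {t : Finset α} (ht : G.IsClique t) :
    (#t : ℕ∞) ≤ cliqueNumE G :=
  le_sSup ⟨#t, ⟨t, ht, rfl⟩, rfl⟩

theorem cliqueNumE_eq_top_of_isClique_of_infinite {C : Set α} (hC : G.IsClique C)
    (hinf : C.Infinite) : cliqueNumE G = ⊤ :=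
  ENat.eq_top_iff_forall_ge.2 fun m => by
    obtain ⟨t, htC, rfl⟩ := hinf.exists_subset_card_eq m
    exact (hC.subset htC).card_le_cliqueNumE

theorem chromaticNumber_eq_cliqueNumE_of_isClique_of_colorable {t : Finset α}
    (ht : G.IsClique t) (hcol : G.Colorable #t) : G.chromaticNumber = cliqueNumE G :=
  le_antisymm (hcol.chromaticNumber_le.trans ht.card_le_cliqueNumE)
    (cliqueNumE_le_chromaticNumber G)

section Split

variable {C : Set α}

theorem colorable_of_isIndepSet_compl (hI : G.IsIndepSet Cᶜ) {t : Finset α} (hCt : C ⊆ t)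
    (hnon : ∀ v ∉ C, ∃ p ∈ t, ¬ G.Adj v p) : G.Colorable #t := by
  classical
  choose! f hft hf using hnon
  let color (v : α) : t := if hv : v ∈ C then ⟨v, hCt hv⟩ else ⟨f v, hft v hv⟩
  have hcolor : ∀ {v w}, G.Adj v w → color v ≠ color w := by
    intro v w hvw
    by_cases hv : v ∈ C <;> by_cases hw : w ∈ C <;>
      simp only [color, hv, hw, dite_true, dite_false, ne_eq, Subtype.mk.injEq]
    · exact G.ne_of_adj hvw
    · exact fun h => hf w hw (h ▸ hvw.symm)
    · exact fun h => hf v hv (h ▸ hvw)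
    · exact absurd hvw (hI hv hw (G.ne_of_adj hvw))
  simpa using (Coloring.mk color hcolor).colorable

theorem exists_isClique_superset_forall_exists_not_adj (hC : G.IsClique C)
    (hI : G.IsIndepSet Cᶜ) (hfin : C.Finite) :
    ∃ t : Finset α, G.IsClique t ∧ C ⊆ t ∧ ∀ v ∉ C, ∃ p ∈ t, ¬ G.Adj v p := by
  classical
  by_cases hfull : ∃ u ∉ C, ∀ p ∈ C, G.Adj u p
  · obtain ⟨u, hu, hup⟩ := hfull
    refine ⟨insert u hfin.toFinset, ?_, ?_, fun v hv => ⟨u, mem_insert_self u _, ?_⟩⟩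
    · rw [coe_insert, Set.Finite.coe_toFinset, isClique_insert]
      exact ⟨hC, fun p hp _ => hup p hp⟩
    · intro x hx
      simp [hx]
    · rcases eq_or_ne v u with rfl | hvu
      · exact G.loopless.irrefl v
      · exact hI hv hu hvu
  · push Not at hfull
    exact ⟨hfin.toFinset, by simpa using hC, by simp, fun v hv => by simpa using hfull v hv⟩

theorem chromaticNumber_eq_cliqueNumE_of_isClique_of_isIndepSet_compl (hC : G.IsClique C)
    (hI : G.IsIndepSet Cᶜ) : G.chromaticNumber = cliqueNumE G := by
  rcases C.finite_or_infinite with hfin | hinf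
  · obtain ⟨t, ht, hCt, hnon⟩ := exists_isClique_superset_forall_exists_not_adj hC hI hfin
    exact chromaticNumber_eq_cliqueNumE_of_isClique_of_colorable ht
      (colorable_of_isIndepSet_compl hI hCt hnon)
  · have hω := cliqueNumE_eq_top_of_isClique_of_infinite hC hinf
    rw [hω, ← top_le_iff, ← hω]
    exact cliqueNumE_le_chromaticNumber G

end Split

theorem IsSplit.isPerfect (h : G.IsSplit) : G.IsPerfect := by
  obtain ⟨C, hC, hI⟩ := h
  intro s
  exact chromaticNumber_eq_cliqueNumE_of_isClique_of_isIndepSet_compl (C := Subtype.val ⁻¹' C)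
    (fun _ ha _ hb hab => hC ha hb (Subtype.coe_injective.ne hab))
    (fun _ ha _ hb hab => hI ha hb (Subtype.coe_injective.ne hab))

end SimpleGraph

namespace Submodule

variable {K V : Type*} [Field K] [AddCommGroup V] [Module K V] [FiniteDimensional K V]

theorem sup_ne_top_of_finrank_add_lt {A B : Submodule K V}
    (h : finrank K A + finrank K B < finrank K V) : A ⊔ B ≠ ⊤ := by
  intro htop
  have := finrank_add_le_finrank_add_finrank A B
  rw [htop, finrank_top] at this
  omega

theorem sup_eq_top_of_finrank_add_one_eq {A B : Submodule K V}
    (hA : finrank K A + 1 = finrank K V) (hB : finrank K B + 1 = finrank K V) (hAB : A ≠ B) :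
    A ⊔ B = ⊤ := by
  by_contra htop
  have hlt := finrank_lt htop
  have hA' : A = A ⊔ B := eq_of_le_of_finrank_le le_sup_left (by omega)
  have hB' : B = A ⊔ B := eq_of_le_of_finrank_le le_sup_right (by omega)
  exact hAB (hA'.trans hB'.symm)

end Submodule

theorem isSplit_subspaceSumGraph {K V : Type*} [Field K] [AddCommGroup V] [Module K V]
    [FiniteDimensional K V] (hdim : finrank K V = 3) : (subspaceSumGraph K V).IsSplit := by
  refine ⟨{W | finrank K W.1 = 2}, ?_, ?_⟩
  · intro A hA B hB hAB
    exact ⟨hAB, Submodule.sup_eq_top_of_finrank_add_one_eq (by simp_all) (by simp_all)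
      (Subtype.coe_injective.ne hAB)⟩
  · rintro A hA B hB - ⟨-, hAB⟩
    have hA' : finrank K A.1 < 3 := hdim ▸ Submodule.finrank_lt A.2.2
    have hB' : finrank K B.1 < 3 := hdim ▸ Submodule.finrank_lt B.2.2
    simp only [Set.mem_compl_iff, Set.mem_ofPred_eq] at hA hB
    exact Submodule.sup_ne_top_of_finrank_add_lt (by omega) hAB

/-- If `dim V = 3`, then neither `G(V)` nor its complement contains an induced odd cycle
of length at least `5`; consequently, by the Strong Perfect Graph Theorem, `G(V)` is
perfect. -/
theorem perfect_of_dim_three (K V : Type*) [Field K] [AddCommGroup V]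
    [Module K V] [FiniteDimensional K V] (hdim : finrank K V = 3) :
    ¬ HasInducedOddCycleGeFive (subspaceSumGraph K V) ∧
    ¬ HasInducedOddCycleGeFive (subspaceSumGraph K V)ᶜ ∧
    (subspaceSumGraph K V).IsPerfect := by
  have hsplit := isSplit_subspaceSumGraph hdim
  exact ⟨hsplit.not_hasInducedOddCycleGeFive, hsplit.compl.not_hasInducedOddCycleGeFive,
    hsplit.isPerfect⟩
end
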